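/- For every positive integer r and 0 < z < 1, Ath(1,…,1;z) (r ones) = (tanh^{−1} z)^r / r!. -/

import Mathlib

open Real Finset

/-- The level-2 multiple polylogarithm
`Ath(k_1,…,k_r;z) = ∑ z^{m_r}/(m_1^{k_1} ⋯ m_r^{k_r})`, the sum over
`0 < m_1 < ⋯ < m_r` with `m_i ≡ i (mod 2)`. -/
noncomputable def AthL (k : List ℕ) (z : ℝ) : ℝ :=
  ∑' n : Fin k.length → ℕ,
    z ^ (∑ i, (2 * n i + 1)) /
      ∏ j, ((∑ i ∈ Finset.Iic j, (2 * n i + 1) : ℕ) : ℝ) ^ (k.get j)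

/-- The inverse hyperbolic tangent `tanh⁻¹ z = (1/2) log((1+z)/(1-z))`,
equal to `∑_{n ≥ 0} z^{2n+1}/(2n+1)` for `|z| < 1`. -/
noncomputable def artanhL (z : ℝ) : ℝ := (1 / 2) * Real.log ((1 + z) / (1 - z))

/-!
With odd gaps `a_i = 2 n_i + 1` and partial sums `m_j = a_1 + ⋯ + a_j`, the rational identity
`∑_{σ ∈ S_r} ∏_j (a_{σ 1} + ⋯ + a_{σ j})⁻¹ = ∏_i a_i⁻¹` (induct on `r`, splitting off the
factor with the full sum `a_1 + ⋯ + a_r`) shows that symmetrising the `Ath` summand over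
`S_r` yields the general term of `(tanh⁻¹ z)^r = (∑_k z^{2k+1}/(2k+1))^r`. Absolute convergence
for `|z| < 1` justifies the rearrangement, and each of the `r!` permuted series has the same sum.
-/

open Equiv

section PermPartialSums

variable {K : Type*} [Field K] [LinearOrder K] [IsStrictOrderedRing K]

theorem sum_perm_prod_inv_sum_Ici {m : ℕ} (a : Fin m → K) (ha : ∀ i, 0 < a i) :
    ∑ σ : Perm (Fin m), ∏ j, (∑ i ∈ Ici j, a (σ i))⁻¹ = ∏ i, (a i)⁻¹ := by
  induction m with
  | zero => simp
  | succ m ih =>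
    rw [← Perm.decomposeFin.symm.sum_comp, Fintype.sum_prod_type]
    have hfirst (p : Fin (m + 1)) (e : Perm (Fin m)) :
        ∏ j, (∑ i ∈ Ici j, a (Perm.decomposeFin.symm (p, e) i))⁻¹ =
          (∑ i, a i)⁻¹ * ∏ j, (∑ i ∈ Ici j, a (swap 0 p (e i).succ))⁻¹ := by
      simp only [Fin.prod_univ_succ, ← bot_eq_zero, Ici_bot, Fin.sum_Ici_succ,
        Perm.decomposeFin_symm_apply_succ, Equiv.sum_comp]
    have hrest (p : Fin (m + 1)) : ∏ i : Fin m, (a (swap 0 p i.succ))⁻¹ = a p * ∏ i, (a i)⁻¹ := by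
      rw [← Equiv.prod_comp (swap 0 p) (fun i => (a i)⁻¹), Fin.prod_univ_succ, swap_apply_left,
        mul_inv_cancel_left₀ (ha p).ne']
    have hsum : (∑ i, a i) ≠ 0 := (sum_pos (fun i _ => ha i) univ_nonempty).ne'
    have hinner (p : Fin (m + 1)) :
        ∑ e : Perm (Fin m), ∏ j, (∑ i ∈ Ici j, a (swap 0 p (e i).succ))⁻¹ = a p * ∏ i, (a i)⁻¹ :=
      (ih (fun i => a (swap 0 p i.succ)) fun _ => ha _).trans (hrest p)
    simp only [hfirst, ← mul_sum, hinner, ← sum_mul, inv_mul_cancel_left₀ hsum]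

theorem sum_perm_prod_inv_sum_Iic {m : ℕ} (a : Fin m → K) (ha : ∀ i, 0 < a i) :
    ∑ σ : Perm (Fin m), ∏ j, (∑ i ∈ Iic j, a (σ i))⁻¹ = ∏ i, (a i)⁻¹ := by
  rw [← sum_perm_prod_inv_sum_Ici a ha, ← Equiv.sum_comp (Equiv.mulRight Fin.revPerm)]
  refine sum_congr rfl fun σ _ => ?_
  rw [← Equiv.prod_comp Fin.revPerm]
  refine prod_congr rfl fun j _ => ?_
  rw [Fin.revPerm_apply, ← Fin.map_revPerm_Ici, sum_map]
  simp

end PermPartialSums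

section PiProducts

variable {R β : Type*} [NormedCommRing R] {g : β → R}

theorem summable_norm_prod_fin_pi (hg : Summable fun b => ‖g b‖) (m : ℕ) :
    Summable fun n : Fin m → β => ‖∏ i, g (n i)‖ := by
  induction m with
  | zero => exact .of_finite
  | succ m ih =>
    rw [← (Fin.consEquiv fun _ => β).summable_iff]
    simpa [Function.comp_def, Fin.prod_univ_succ] using hg.mul_norm ih

theorem hasSum_prod_fin_pi [CompleteSpace R] (hg : Summable fun b => ‖g b‖) (m : ℕ) :
    HasSum (fun n : Fin m → β => ∏ i, g (n i)) ((∑' b, g b) ^ m) := by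
  induction m with
  | zero => simp
  | succ m ih =>
    have hprod : Summable fun p : β × (Fin m → β) => g p.1 * ∏ i, g (p.2 i) :=
      summable_mul_of_summable_norm (g := fun n : Fin m → β => ∏ i, g (n i)) hg
        (summable_norm_prod_fin_pi hg m)
    rw [← (Fin.consEquiv fun _ => β).hasSum_iff, pow_succ']
    simpa [Function.comp_def, Fin.prod_univ_succ] using hg.of_norm.hasSum.mul ih hprod

end PiProducts

noncomputable def artanhTerm (z : ℝ) (k : ℕ) : ℝ := z ^ (2 * k + 1) / (2 * k + 1)

noncomputable def athOnesTerm {m : ℕ} (z : ℝ) (n : Fin m → ℕ) : ℝ :=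
  z ^ (∑ i, (2 * n i + 1)) / ∏ j, ((∑ i ∈ Iic j, (2 * n i + 1) : ℕ) : ℝ)

theorem hasSum_artanhTerm {z : ℝ} (hz : |z| < 1) : HasSum (artanhTerm z) (artanhL z) := by
  obtain ⟨hz₁, hz₂⟩ := abs_lt.mp hz
  rw [artanhL, Real.log_div (by linarith) (by linarith)]
  refine ((Real.hasSum_log_sub_log_of_abs_lt_one hz).mul_left (1 / 2)).congr_fun fun k => ?_
  rw [artanhTerm]
  ring

theorem norm_artanhTerm (z : ℝ) (k : ℕ) : ‖artanhTerm z k‖ = artanhTerm |z| k := by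
  rw [artanhTerm, artanhTerm, norm_div, norm_pow, Real.norm_eq_abs, Real.norm_eq_abs,
    abs_of_pos (a := (2 * k + 1 : ℝ)) (by positivity)]

theorem norm_athOnesTerm_le {m : ℕ} (z : ℝ) (n : Fin m → ℕ) :
    ‖athOnesTerm z n‖ ≤ ‖∏ i, artanhTerm z (n i)‖ := by
  have hle (j : Fin m) : ((2 * n j + 1 : ℕ) : ℝ) ≤ ((∑ i ∈ Iic j, (2 * n i + 1) : ℕ) : ℝ) := by
    exact_mod_cast single_le_sum (f := fun i => 2 * n i + 1) (fun i _ => Nat.zero_le _)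
      (mem_Iic.mpr le_rfl)
  calc ‖athOnesTerm z n‖
      = |z| ^ (∑ i, (2 * n i + 1)) / ∏ j, ((∑ i ∈ Iic j, (2 * n i + 1) : ℕ) : ℝ) := by
        rw [athOnesTerm, norm_div, norm_pow, norm_prod, Real.norm_eq_abs]
        simp only [Real.norm_natCast]
    _ ≤ |z| ^ (∑ i, (2 * n i + 1)) / ∏ j, ((2 * n j + 1 : ℕ) : ℝ) :=
        div_le_div_of_nonneg_left (by positivity) (by positivity)
          (prod_le_prod (fun _ _ => by positivity) fun j _ => hle j)
    _ = ‖∏ i, artanhTerm z (n i)‖ := by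
        simp only [norm_prod, norm_artanhTerm]
        simp only [artanhTerm, prod_div_distrib, prod_pow_eq_pow_sum]
        norm_cast

theorem sum_perm_athOnesTerm {m : ℕ} (z : ℝ) (n : Fin m → ℕ) :
    ∑ σ : Perm (Fin m), athOnesTerm z (n ∘ σ) = ∏ i, artanhTerm z (n i) := by
  have hterm (σ : Perm (Fin m)) : athOnesTerm z (n ∘ σ) =
      z ^ (∑ i, (2 * n i + 1)) * ∏ j, (∑ i ∈ Iic j, ((2 * n (σ i) + 1 : ℕ) : ℝ))⁻¹ := by
    simp only [athOnesTerm, Function.comp_apply]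
    rw [Equiv.sum_comp σ (fun i => 2 * n i + 1), div_eq_mul_inv, ← prod_inv_distrib]
    norm_cast
  rw [sum_congr rfl fun σ _ => hterm σ, ← mul_sum,
    sum_perm_prod_inv_sum_Iic (fun i => ((2 * n i + 1 : ℕ) : ℝ)) fun i => by positivity]
  simp only [artanhTerm, div_eq_mul_inv, prod_mul_distrib, prod_pow_eq_pow_sum]
  norm_cast

theorem hasSum_athOnesTerm {z : ℝ} (hz : |z| < 1) (m : ℕ) :
    HasSum (athOnesTerm z : (Fin m → ℕ) → ℝ) (artanhL z ^ m / m.factorial) := by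
  have hgn : Summable fun k => ‖artanhTerm z k‖ := by
    simpa only [norm_artanhTerm] using (hasSum_artanhTerm (by rwa [abs_abs])).summable
  have hsummable : Summable (athOnesTerm z : (Fin m → ℕ) → ℝ) :=
    .of_norm_bounded (summable_norm_prod_fin_pi hgn m) (norm_athOnesTerm_le z)
  have hσ (σ : Perm (Fin m)) :
      HasSum (fun n : Fin m → ℕ => athOnesTerm z (n ∘ σ)) (∑' n : Fin m → ℕ, athOnesTerm z n) := by
    have he (n : Fin m → ℕ) : σ.symm.arrowCongr (Equiv.refl ℕ) n = n ∘ σ := rfl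
    simpa only [Function.comp_def, he] using
      (σ.symm.arrowCongr (Equiv.refl ℕ)).hasSum_iff.mpr hsummable.hasSum
  have hperm := hasSum_sum (s := univ) fun σ _ => hσ σ
  simp only [sum_perm_athOnesTerm, sum_const, card_univ, Fintype.card_perm, Fintype.card_fin,
    nsmul_eq_mul] at hperm
  have hpow := (hasSum_prod_fin_pi hgn m).unique hperm
  rw [(hasSum_artanhTerm hz).tsum_eq] at hpow
  rw [hpow, mul_div_cancel_left₀ _ (by positivity)]
  exact hsummable.hasSum

theorem stmt15_general (r : ℕ) (z : ℝ) (h0 : 0 < z) (h1 : z < 1) :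
    AthL (List.replicate r 1) z = (artanhL z) ^ r / (r.factorial : ℝ) := by
  have hz : |z| < 1 := abs_lt.mpr ⟨by linarith, h1⟩
  have hterm (n : Fin (List.replicate r 1).length → ℕ) :
      z ^ (∑ i, (2 * n i + 1)) /
        ∏ j, ((∑ i ∈ Iic j, (2 * n i + 1) : ℕ) : ℝ) ^ ((List.replicate r 1).get j) =
      athOnesTerm z n := by
    simp [athOnesTerm]
  rw [AthL, tsum_congr hterm, (hasSum_athOnesTerm hz _).tsum_eq, List.length_replicate]

theorem stmt15 (r : ℕ) (hr : 0 < r) (z : ℝ) (h0 : 0 < z) (h1 : z < 1) :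
    AthL (List.replicate r 1) z = (artanhL z) ^ r / (r.factorial : ℝ) :=
  stmt15_general r z h0 h1
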